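/- arXiv:1312.1666 — 8 statements merged into one kernel-verified Lean document; each statement's English description precedes it below -/
import Mathlib

section
/- Let x* be the minimizer of f, so that ∇f(x*) = 0. Then for every x in E, (1/n) Σ_{i=1}^n ‖∇f_i(x) − ∇f_i(x*)‖² ≤ 2L (f(x) − f(x*)). -/
open scoped RealInnerProductSpace BigOperators

open Finset

section

variable {E : Type*} [NormedAddCommGroup E] [InnerProductSpace ℝ E]

/-- Evaluate the two first-order inequalities at `z = x - L⁻¹ • (g x - g y)`, the gradient step
from `x` corrected by `g y`: smoothness at `x` bounds `φ z` from above, convexity at `y` from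
below, and the gap between the two bounds is `(2L)⁻¹ ‖g x - g y‖²`. -/
theorem sq_norm_sub_le_of_convex_of_smooth {φ : E → ℝ} {g : E → E} {L : ℝ} (hL : 0 < L)
    (hconv : ∀ x z, φ x + ⟪g x, z - x⟫ ≤ φ z)
    (hsmooth : ∀ x z, φ z ≤ φ x + ⟪g x, z - x⟫ + L / 2 * ‖z - x‖ ^ 2) (x y : E) :
    ‖g x - g y‖ ^ 2 ≤ 2 * L * (φ x - φ y - ⟪g y, x - y⟫) := by
  set d := g x - g y
  set z := x - L⁻¹ • d
  have hz_sub_x : z - x = -(L⁻¹ • d) := sub_sub_cancel_left x _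
  have hz_sub_y : z - y = (x - y) - L⁻¹ • d := sub_right_comm x _ y
  have upper : φ z ≤ φ x - L⁻¹ * ⟪g x, d⟫ + L⁻¹ / 2 * ‖d‖ ^ 2 := by
    have h := hsmooth x z
    rw [hz_sub_x, inner_neg_right, real_inner_smul_right, norm_neg, norm_smul, mul_pow,
      Real.norm_eq_abs, sq_abs] at h
    have hscale : L / 2 * (L⁻¹ ^ 2 * ‖d‖ ^ 2) = L⁻¹ / 2 * ‖d‖ ^ 2 := by field_simp
    linarith
  have lower : φ y + ⟪g y, x - y⟫ - L⁻¹ * ⟪g y, d⟫ ≤ φ z := by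
    have h := hconv y z
    rwa [hz_sub_y, inner_sub_right, real_inner_smul_right, ← add_sub_assoc] at h
  have hd : L⁻¹ * ⟪g x, d⟫ - L⁻¹ * ⟪g y, d⟫ = L⁻¹ * ‖d‖ ^ 2 := by
    rw [← mul_sub, ← inner_sub_left, real_inner_self_eq_norm_sq]
  have gap : L⁻¹ / 2 * ‖d‖ ^ 2 ≤ φ x - φ y - ⟪g y, x - y⟫ := by
    linarith
  calc ‖d‖ ^ 2 = 2 * L * (L⁻¹ / 2 * ‖d‖ ^ 2) := by field_simp
    _ ≤ 2 * L * (φ x - φ y - ⟪g y, x - y⟫) := by gcongr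

theorem HasGradientAt.const_mul_sum [CompleteSpace E] {ι : Type*} (s : Finset ι)
    {f : ι → E → ℝ} {f' : ι → E} {x : E} (hf : ∀ i ∈ s, HasGradientAt (f i) (f' i) x) (c : ℝ) :
    HasGradientAt (fun y => c * ∑ i ∈ s, f i y) (c • ∑ i ∈ s, f' i) x := by
  rw [hasGradientAt_iff_hasFDerivAt, map_smul, map_sum]
  exact (HasFDerivAt.fun_sum fun i hi => (hf i hi).hasFDerivAt).const_mul c

end

theorem s2gd_grad_norm_bound_general
    {E : Type*} [NormedAddCommGroup E] [InnerProductSpace ℝ E] [CompleteSpace E]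
    {n : ℕ} (f : Fin n → E → ℝ) {L : ℝ} (hL : 0 < L)
    (hdiff : ∀ i, Differentiable ℝ (f i))
    (hconv : ∀ i, ∀ x z : E, f i x + ⟪gradient (f i) x, z - x⟫ ≤ f i z)
    (hsmooth : ∀ i, ∀ x z : E,
      f i z ≤ f i x + ⟪gradient (f i) x, z - x⟫ + L / 2 * ‖z - x‖ ^ 2)
    (favg : E → ℝ) (hfavg : favg = fun x => (1 / (n : ℝ)) * ∑ i, f i x)
    (xstar : E) (hstar : gradient favg xstar = 0) (x : E) :
    (1 / (n : ℝ)) * ∑ i, ‖gradient (f i) x - gradient (f i) xstar‖ ^ 2 ≤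
      2 * L * (favg x - favg xstar) := by
  have hgrad : gradient favg xstar = (1 / (n : ℝ)) • ∑ i, gradient (f i) xstar := by
    subst hfavg
    exact (HasGradientAt.const_mul_sum _ (fun i _ => (hdiff i xstar).hasGradientAt) _).gradient
  calc (1 / (n : ℝ)) * ∑ i, ‖gradient (f i) x - gradient (f i) xstar‖ ^ 2
      ≤ (1 / (n : ℝ)) * ∑ i, 2 * L *
          (f i x - f i xstar - ⟪gradient (f i) xstar, x - xstar⟫) := by
        gcongr with i
        exact sq_norm_sub_le_of_convex_of_smooth hL (hconv i) (hsmooth i) x xstar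
    _ = 2 * L * (favg x - favg xstar - ⟪gradient favg xstar, x - xstar⟫) := by
        rw [hgrad, hfavg, real_inner_smul_left, sum_inner, ← mul_sum, sum_sub_distrib,
          sum_sub_distrib]
        ring
    _ = 2 * L * (favg x - favg xstar) := by rw [hstar, inner_zero_left, sub_zero]

/-- For differentiable, convex, `L`-smooth functions `f i` with average `f`
and a stationary point `xstar` of `f`, we have
`(1/n) ∑ i, ‖∇f_i x − ∇f_i x*‖² ≤ 2L (f x − f x*)`. -/
theorem s2gd_grad_norm_bound
    {E : Type*} [NormedAddCommGroup E] [InnerProductSpace ℝ E] [CompleteSpace E]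
    {n : ℕ} (hn : 0 < n) (f : Fin n → E → ℝ) {L : ℝ} (hL : 0 < L)
    (hdiff : ∀ i, Differentiable ℝ (f i))
    (hconv : ∀ i, ∀ x z : E, f i x + ⟪gradient (f i) x, z - x⟫ ≤ f i z)
    (hsmooth : ∀ i, ∀ x z : E,
      f i z ≤ f i x + ⟪gradient (f i) x, z - x⟫ + L / 2 * ‖z - x‖ ^ 2)
    (favg : E → ℝ) (hfavg : favg = fun x => (1 / (n : ℝ)) * ∑ i, f i x)
    (xstar : E) (hstar : gradient favg xstar = 0) (x : E) :
    (1 / (n : ℝ)) * ∑ i, ‖gradient (f i) x - gradient (f i) xstar‖ ^ 2 ≤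
      2 * L * (favg x - favg xstar) :=
  s2gd_grad_norm_bound_general f hL hdiff hconv hsmooth favg hfavg xstar hstar x
end

section
/- For all x, y ∈ E, the averaged squared norm of the semi-stochastic gradient direction satisfies (1/n) Σ_{i=1}^n ‖∇f(x) + ∇f_i(y) − ∇f_i(x)‖² ≤ 4L (f(y) − f(x*)) + 4(L − μ)(f(x) − f(x*)). -/
open scoped RealInnerProductSpace BigOperators

/-! Write `aᵢ = ∇fᵢ y - ∇fᵢ x*` and `bᵢ = ∇fᵢ x - ∇fᵢ x*`. Since `∑ᵢ ∇fᵢ x* = 0`, the mean of the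
`bᵢ` is `∇f x`, and the direction is `aᵢ - (bᵢ - ∇f x)`. Its second moment is therefore at most
twice the mean of `‖aᵢ‖²` plus twice the variance of the `bᵢ`, which is the mean of `‖bᵢ‖²` minus
`‖∇f x‖²`. Convexity and `L`-smoothness of `fᵢ` bound `‖∇fᵢ z - ∇fᵢ x*‖²` by `2L` times the
Bregman divergence of `fᵢ` from `x*` to `z`, and these divergences average to `f z - f x*`.
Finally strong convexity gives `‖∇f x‖² ≥ 2μ (f x - f x*)`. -/

section

variable {E : Type*} [NormedAddCommGroup E] [InnerProductSpace ℝ E]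

theorem norm_sub_sq_le_bregman_of_convex_of_smooth (φ : E → ℝ) (G : E → E) {L : ℝ}
    (hL : 0 < L) (hconv : ∀ x z, φ x + ⟪G x, z - x⟫ ≤ φ z)
    (hsmooth : ∀ x z, φ z ≤ φ x + ⟪G x, z - x⟫ + L / 2 * ‖z - x‖ ^ 2) (x z : E) :
    ‖G z - G x‖ ^ 2 ≤ 2 * L * (φ z - φ x - ⟪G x, z - x⟫) := by
  set g := G z - G x
  -- evaluate both inequalities at the gradient step `z - L⁻¹ • g`
  have hlow := hconv x (z - L⁻¹ • g)
  have hup := hsmooth z (z - L⁻¹ • g)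
  have hgg : ⟪G z, g⟫ - ⟪G x, g⟫ = ‖g‖ ^ 2 := by
    rw [← inner_sub_left, real_inner_self_eq_norm_sq]
  rw [sub_sub_cancel_left, norm_neg, norm_smul, Real.norm_of_nonneg (inv_nonneg.2 hL.le),
    inner_neg_right, real_inner_smul_right] at hup
  rw [sub_right_comm, inner_sub_right, real_inner_smul_right] at hlow
  have hstep : ‖g‖ ^ 2 / (2 * L) ≤ φ z - φ x - ⟪G x, z - x⟫ := by
    have : L / 2 * (L⁻¹ * ‖g‖) ^ 2 = ‖g‖ ^ 2 / (2 * L) := by field_simp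
    have : L⁻¹ * ⟪G z, g⟫ - L⁻¹ * ⟪G x, g⟫ = ‖g‖ ^ 2 / L := by rw [← mul_sub, hgg]; field_simp
    have : ‖g‖ ^ 2 / L = ‖g‖ ^ 2 / (2 * L) + ‖g‖ ^ 2 / (2 * L) := by field_simp; ring
    linarith
  rwa [div_le_iff₀' (by positivity)] at hstep

theorem two_mul_mul_sub_le_norm_sq_of_strongly_convex {μ a b : ℝ} (hμ : 0 ≤ μ) {g v : E}
    (h : a + ⟪g, v⟫ + μ / 2 * ‖v‖ ^ 2 ≤ b) : 2 * μ * (a - b) ≤ ‖g‖ ^ 2 := by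
  have hsq : 0 ≤ ‖g + μ • v‖ ^ 2 := sq_nonneg _
  rw [norm_add_sq_real, inner_smul_right, norm_smul, Real.norm_of_nonneg hμ] at hsq
  nlinarith

theorem norm_sub_sq_le_two_mul_add (a b : E) : ‖a - b‖ ^ 2 ≤ 2 * ‖a‖ ^ 2 + 2 * ‖b‖ ^ 2 := by
  have := parallelogram_law_with_norm ℝ a b
  nlinarith [sq_nonneg ‖a + b‖]

theorem Finset.sum_norm_sub_sq_eq_of_sum_eq {ι : Type*} (s : Finset ι) (b : ι → E) {g : E}
    (hg : ∑ i ∈ s, b i = (s.card : ℝ) • g) :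
    ∑ i ∈ s, ‖b i - g‖ ^ 2 = ∑ i ∈ s, ‖b i‖ ^ 2 - s.card * ‖g‖ ^ 2 := by
  simp only [norm_sub_sq_real, Finset.sum_add_distrib, Finset.sum_sub_distrib, Finset.sum_const,
    nsmul_eq_mul, ← Finset.mul_sum, ← sum_inner, hg, real_inner_smul_left,
    real_inner_self_eq_norm_sq]
  ring

theorem Finset.sum_norm_add_sub_sq_le {ι : Type*} (s : Finset ι) (a b : ι → E) {g : E}
    (hg : ∑ i ∈ s, b i = (s.card : ℝ) • g) :
    ∑ i ∈ s, ‖g + a i - b i‖ ^ 2 ≤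
      2 * ∑ i ∈ s, ‖a i‖ ^ 2 + 2 * ∑ i ∈ s, ‖b i‖ ^ 2 - 2 * s.card * ‖g‖ ^ 2 := by
  calc ∑ i ∈ s, ‖g + a i - b i‖ ^ 2 = ∑ i ∈ s, ‖a i - (b i - g)‖ ^ 2 := by
        congr! 2; abel_nf
    _ ≤ ∑ i ∈ s, (2 * ‖a i‖ ^ 2 + 2 * ‖b i - g‖ ^ 2) :=
        Finset.sum_le_sum fun i _ => norm_sub_sq_le_two_mul_add _ _
    _ = _ := by
        rw [Finset.sum_add_distrib, ← Finset.mul_sum, ← Finset.mul_sum,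
          s.sum_norm_sub_sq_eq_of_sum_eq b hg]
        ring

theorem Finset.sum_norm_sub_sq_le_of_convex_of_smooth {ι : Type*} (s : Finset ι)
    (φ : ι → E → ℝ) (G : ι → E → E) {L : ℝ} (hL : 0 < L)
    (hconv : ∀ i, ∀ x z, φ i x + ⟪G i x, z - x⟫ ≤ φ i z)
    (hsmooth : ∀ i, ∀ x z, φ i z ≤ φ i x + ⟪G i x, z - x⟫ + L / 2 * ‖z - x‖ ^ 2)
    {x₀ : E} (h₀ : ∑ i ∈ s, G i x₀ = 0) (z : E) :
    ∑ i ∈ s, ‖G i z - G i x₀‖ ^ 2 ≤ 2 * L * (∑ i ∈ s, φ i z - ∑ i ∈ s, φ i x₀) := by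
  calc ∑ i ∈ s, ‖G i z - G i x₀‖ ^ 2
      ≤ ∑ i ∈ s, 2 * L * (φ i z - φ i x₀ - ⟪G i x₀, z - x₀⟫) :=
        Finset.sum_le_sum fun i _ =>
          norm_sub_sq_le_bregman_of_convex_of_smooth _ _ hL (hconv i) (hsmooth i) x₀ z
    _ = 2 * L * (∑ i ∈ s, φ i z - ∑ i ∈ s, φ i x₀) := by
        rw [← Finset.mul_sum, Finset.sum_sub_distrib, Finset.sum_sub_distrib, ← sum_inner, h₀,
          inner_zero_left, sub_zero]

variable [CompleteSpace E]

theorem gradient_const_mul_sum {ι : Type*} (s : Finset ι) (f : ι → E → ℝ) (c : ℝ) {x : E}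
    (hf : ∀ i ∈ s, DifferentiableAt ℝ (f i) x) :
    gradient (fun z => c * ∑ i ∈ s, f i z) x = c • ∑ i ∈ s, gradient (f i) x := by
  simp only [gradient, ← map_sum, ← map_smul]
  rw [fderiv_const_mul (DifferentiableAt.fun_sum hf), fderiv_fun_sum hf]

end

theorem s2gd_direction_second_moment_bound_general
    {E : Type*} [NormedAddCommGroup E] [InnerProductSpace ℝ E] [CompleteSpace E]
    {n : ℕ} (hn : 0 < n) (f : Fin n → E → ℝ) {L μ : ℝ} (hL : 0 < L)
    (hμpos : 0 < μ)
    (hdiff : ∀ i, Differentiable ℝ (f i))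
    (hconv : ∀ i, ∀ x z : E, f i x + ⟪gradient (f i) x, z - x⟫ ≤ f i z)
    (hsmooth : ∀ i, ∀ x z : E,
      f i z ≤ f i x + ⟪gradient (f i) x, z - x⟫ + L / 2 * ‖z - x‖ ^ 2)
    (favg : E → ℝ) (hfavg : favg = fun x => (1 / (n : ℝ)) * ∑ i, f i x)
    (hstrong : ∀ x z : E,
      favg x + ⟪gradient favg x, z - x⟫ + μ / 2 * ‖z - x‖ ^ 2 ≤ favg z)
    (xstar : E)
    (hstar : gradient favg xstar = 0) (x y : E) :
    (1 / (n : ℝ)) *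
        ∑ i, ‖gradient favg x + gradient (f i) y - gradient (f i) x‖ ^ 2 ≤
      4 * L * (favg y - favg xstar) + 4 * (L - μ) * (favg x - favg xstar) := by
  have hn' : (0 : ℝ) < n := Nat.cast_pos.2 hn
  have hgrad (z : E) : gradient favg z = (1 / (n : ℝ)) • ∑ i, gradient (f i) z := by
    subst hfavg; exact gradient_const_mul_sum _ _ _ fun i _ => (hdiff i).differentiableAt
  have hsum (z : E) : ∑ i, f i z = n * favg z := by
    rw [hfavg]; field_simp
  have hsum_star : ∑ i, gradient (f i) xstar = 0 := by
    simpa [hgrad, hn.ne'] using hstar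
  have hsum_x : ∑ i, (gradient (f i) x - gradient (f i) xstar) =
      ((Finset.univ : Finset (Fin n)).card : ℝ) • gradient favg x := by
    rw [Finset.sum_sub_distrib, hsum_star, sub_zero, hgrad, Finset.card_univ, Fintype.card_fin,
      smul_smul, mul_one_div_cancel hn'.ne', one_smul]
  have hdir := Finset.univ.sum_norm_add_sub_sq_le
    (fun i => gradient (f i) y - gradient (f i) xstar)
    (fun i => gradient (f i) x - gradient (f i) xstar) hsum_x
  simp only [add_sub_assoc, sub_sub_sub_cancel_right, Finset.card_univ, Fintype.card_fin] at hdir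
  have hy := Finset.univ.sum_norm_sub_sq_le_of_convex_of_smooth f _ hL hconv hsmooth hsum_star y
  have hx := Finset.univ.sum_norm_sub_sq_le_of_convex_of_smooth f _ hL hconv hsmooth hsum_star x
  have hPL := two_mul_mul_sub_le_norm_sq_of_strongly_convex hμpos.le (hstrong x xstar)
  rw [hsum, hsum] at hx hy
  simp only [add_sub_assoc]
  rw [one_div, inv_mul_le_iff₀ hn']
  nlinarith [mul_le_mul_of_nonneg_left hPL hn'.le]

/-- bound on the averaged squared norm of the semi-stochastic gradient
direction: `(1/n) ∑ i, ‖∇f x + ∇f_i y − ∇f_i x‖² ≤ 4L (f y − f x*) + 4(L−μ)(f x − f x*)`. -/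
theorem s2gd_direction_second_moment_bound
    {E : Type*} [NormedAddCommGroup E] [InnerProductSpace ℝ E] [CompleteSpace E]
    {n : ℕ} (hn : 0 < n) (f : Fin n → E → ℝ) {L μ : ℝ} (hL : 0 < L)
    (hμpos : 0 < μ) (hμL : μ ≤ L)
    (hdiff : ∀ i, Differentiable ℝ (f i))
    (hconv : ∀ i, ∀ x z : E, f i x + ⟪gradient (f i) x, z - x⟫ ≤ f i z)
    (hsmooth : ∀ i, ∀ x z : E,
      f i z ≤ f i x + ⟪gradient (f i) x, z - x⟫ + L / 2 * ‖z - x‖ ^ 2)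
    (favg : E → ℝ) (hfavg : favg = fun x => (1 / (n : ℝ)) * ∑ i, f i x)
    (hstrong : ∀ x z : E,
      favg x + ⟪gradient favg x, z - x⟫ + μ / 2 * ‖z - x‖ ^ 2 ≤ favg z)
    (xstar : E) (hmin : ∀ z : E, favg xstar ≤ favg z)
    (hstar : gradient favg xstar = 0) (x y : E) :
    (1 / (n : ℝ)) *
        ∑ i, ‖gradient favg x + gradient (f i) y - gradient (f i) x‖ ^ 2 ≤
      4 * L * (favg y - favg xstar) + 4 * (L - μ) * (favg x - favg xstar) :=
  s2gd_direction_second_moment_bound_general hn f hL hμpos hdiff hconv hsmooth favg hfavg hstrong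
    xstar hstar x y
end

section
/- Let 0 < μ ≤ L, 0 < h < 1/(2L), 0 ≤ ν ≤ μ, q = 1 − νh, m ≥ 1 an integer, and β = Σ_{t=1}^m q^{m−t}. Let D ≥ 0, and let a_0, ..., a_m and b_0, ..., b_{m−1} be reals with a_m ≥ 0, a_0 ≤ (2/μ) D, and a_t + 2h(1 − 2Lh) b_{t−1} ≤ q a_{t−1} + 4(L − μ)h² D for each t = 1, ..., m. Then (1/β) Σ_{t=1}^m q^{m−t} b_{t−1} ≤ c · D, where c = q^m/(β μ h (1 − 2Lh)) + 2(L − μ)h/(1 − 2Lh). -/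
/-!
Multiplying the `t`-th step inequality by `q ^ (m - t) ≥ 0` and summing over `t`, the terms in
`a` telescope, leaving `a m + C ∑ q^(m-t) b (t-1) ≤ q ^ m a 0 + β K` with `C = 2h(1 - 2Lh)` and
`K = 4(L - μ)h² D`. Dropping `a m ≥ 0`, bounding `a 0` by `(2/μ) D` and dividing by `C β`
gives the claim.
-/

open Finset

lemma sum_Icc_pow_sub_mul_succ {R : Type*} [CommSemiring R] (q : R) (f : ℕ → R) (m : ℕ) :
    ∑ t ∈ Icc 1 (m + 1), q ^ (m + 1 - t) * f t
      = q * ∑ t ∈ Icc 1 m, q ^ (m - t) * f t + f (m + 1) := by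
  rw [sum_Icc_succ_top (by omega), mul_sum, Nat.sub_self, pow_zero, one_mul]
  congr 1
  refine sum_congr rfl fun t ht => ?_
  rw [Nat.sub_add_comm (mem_Icc.mp ht).2, pow_succ']
  ring

lemma add_sum_pow_sub_mul_le_of_step {R : Type*} [CommRing R] [LinearOrder R]
    [IsStrictOrderedRing R] {q K : R} (hq : 0 ≤ q) (a b : ℕ → R) (m : ℕ)
    (hstep : ∀ t, 1 ≤ t → t ≤ m → a t + b (t - 1) ≤ q * a (t - 1) + K) :
    a m + ∑ t ∈ Icc 1 m, q ^ (m - t) * b (t - 1)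
      ≤ q ^ m * a 0 + (∑ t ∈ Icc 1 m, q ^ (m - t)) * K := by
  induction m with
  | zero => simp
  | succ m ih =>
    have hprev := mul_le_mul_of_nonneg_left (ih fun t h1 h2 => hstep t h1 (by omega)) hq
    have hlast := hstep (m + 1) (by omega) le_rfl
    have hweights := sum_Icc_pow_sub_mul_succ q (fun _ => (1 : R)) m
    simp only [mul_one, Nat.add_sub_cancel] at hweights hlast
    rw [sum_Icc_pow_sub_mul_succ q (fun t => b (t - 1)), hweights, pow_succ']
    simp only [Nat.add_sub_cancel]
    linarith

theorem s2gd_single_epoch_contraction_general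
    {L μ ν h : ℝ} (hμL : μ ≤ L) (hh0 : 0 < h) (hh : h < 1 / (2 * L))
    (hνμ : ν ≤ μ)
    {m : ℕ} (hm : 1 ≤ m) {q : ℝ} (hq : q = 1 - ν * h)
    {β : ℝ} (hβ : β = ∑ t ∈ Finset.Icc 1 m, q ^ (m - t))
    {D : ℝ} (a b : ℕ → ℝ) (ham : 0 ≤ a m) (ha0 : a 0 ≤ 2 / μ * D)
    (hrec : ∀ t, 1 ≤ t → t ≤ m →
      a t + 2 * h * (1 - 2 * L * h) * b (t - 1) ≤ q * a (t - 1) + 4 * (L - μ) * h ^ 2 * D)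
    {c : ℝ}
    (hc : c = q ^ m / (β * μ * h * (1 - 2 * L * h)) + 2 * (L - μ) * h / (1 - 2 * L * h)) :
    (1 / β) * ∑ t ∈ Finset.Icc 1 m, q ^ (m - t) * b (t - 1) ≤ c * D := by
  have hL : 0 < L := by
    by_contra! hL
    have : 1 / (2 * L) ≤ 0 := one_div_nonpos.mpr (by linarith)
    linarith
  have hLh : 2 * L * h < 1 := by rwa [lt_div_iff₀ (by positivity), mul_comm] at hh
  have hC : 0 < 2 * h * (1 - 2 * L * h) := by nlinarith
  have hq0 : 0 < q := by nlinarith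
  have hβ0 : 0 < β := hβ ▸ sum_pos (fun t _ => by positivity) ⟨1, by simp [hm]⟩
  have key := add_sum_pow_sub_mul_le_of_step hq0.le a (fun s => 2 * h * (1 - 2 * L * h) * b s) m
    (hrec · · ·)
  rw [← hβ] at key
  have ha0' := mul_le_mul_of_nonneg_left ha0 (pow_nonneg hq0.le m)
  simp only [mul_left_comm _ (2 * h * (1 - 2 * L * h)), ← mul_sum] at key
  rw [hc, one_div, inv_mul_le_iff₀ hβ0]
  refine le_of_mul_le_mul_left ?_ hC
  calc _ ≤ q ^ m * (2 / μ * D) + β * (4 * (L - μ) * h ^ 2 * D) := by linarith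
    _ = _ := by
      have : 1 - 2 * L * h ≠ 0 := by linarith
      field_simp
      ring

/-- single-epoch contraction of S2GD. Under the stated per-step inequalities,
`(1/β) ∑_{t=1}^m q^{m−t} b_{t−1} ≤ c D` where
`c = q^m/(β μ h (1 − 2Lh)) + 2(L − μ)h/(1 − 2Lh)`. -/
theorem s2gd_single_epoch_contraction
    {L μ ν h : ℝ} (hμ : 0 < μ) (hμL : μ ≤ L) (hh0 : 0 < h) (hh : h < 1 / (2 * L))
    (hν0 : 0 ≤ ν) (hνμ : ν ≤ μ)
    {m : ℕ} (hm : 1 ≤ m) {q : ℝ} (hq : q = 1 - ν * h)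
    {β : ℝ} (hβ : β = ∑ t ∈ Finset.Icc 1 m, q ^ (m - t))
    {D : ℝ} (hD : 0 ≤ D) (a b : ℕ → ℝ) (ham : 0 ≤ a m) (ha0 : a 0 ≤ 2 / μ * D)
    (hrec : ∀ t, 1 ≤ t → t ≤ m →
      a t + 2 * h * (1 - 2 * L * h) * b (t - 1) ≤ q * a (t - 1) + 4 * (L - μ) * h ^ 2 * D)
    {c : ℝ}
    (hc : c = q ^ m / (β * μ * h * (1 - 2 * L * h)) + 2 * (L - μ) * h / (1 - 2 * L * h)) :
    (1 / β) * ∑ t ∈ Finset.Icc 1 m, q ^ (m - t) * b (t - 1) ≤ c * D :=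
  s2gd_single_epoch_contraction_general hμL hh0 hh hνμ hm hq hβ a b ham ha0 hrec hc
end

section
/- Let 0 < μ < L, κ = L/μ, and 0 < Δ < 1. Set h = 1/((4/Δ)(L − μ) + 2L), and let m be a positive integer with m ≥ ((4(κ−1))/Δ + 2κ) · log(2/Δ + (2κ−1)/(κ−1)). Then (1 − μh)^m / ((1 − (1 − μh)^m)(1 − 2Lh)) + 2(L − μ)h/(1 − 2Lh) ≤ Δ. -/
/-! Write `e = 2(L - μ)h`. The choice of `h` makes `1 - 2Lh = (2/Δ)e`, so the second summand is
exactly `Δ/2`, and the first is at most `Δ/2` as soon as `x = (1 - μh)^m` satisfies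
`x/(1 - x) ≤ e`, i.e. `x ≤ (1 + 1/e)⁻¹`. The same choice gives `μh = 1/A` and `1 + 1/e = R` for
the factor `A` and the argument `R` of the logarithm in the bound on `m`, and then
`(1 - 1/A)^m ≤ exp(-m/A) ≤ exp(-log R) = 1/R`. -/

open Real

theorem one_sub_inv_pow_le_inv_of_mul_log_le {A R : ℝ} {m : ℕ} (hA : 1 ≤ A) (hR : 0 < R)
    (hm : A * log R ≤ m) : (1 - A⁻¹) ^ m ≤ R⁻¹ := by
  have hA0 : 0 < A := by linarith
  calc (1 - A⁻¹) ^ m ≤ exp (-A⁻¹) ^ m := by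
        gcongr
        · linarith [inv_le_one_of_one_le₀ hA]
        · linarith [add_one_le_exp (-A⁻¹)]
    _ = exp (-(m * A⁻¹)) := by rw [← exp_nat_mul, mul_neg]
    _ ≤ exp (-log R) := by
        gcongr
        rwa [← div_eq_mul_inv, le_div_iff₀ hA0, mul_comm]
    _ = R⁻¹ := by rw [exp_neg, exp_log hR]

theorem div_one_sub_le_of_le_inv_one_add_inv {x e : ℝ} (he : 0 < e) (hx : x ≤ (1 + e⁻¹)⁻¹) :
    x / (1 - x) ≤ e := by
  have hx' : x * (1 + e⁻¹) ≤ 1 := by rwa [← le_inv_mul_iff₀' (by positivity), mul_one]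
  have hx1 : 0 < 1 - x := by nlinarith [inv_pos.2 he]
  rw [div_le_iff₀ hx1]
  nlinarith [mul_inv_cancel₀ he.ne']

namespace S2GD

variable {L μ Δ h : ℝ}

theorem stepsize_denom_pos (hμ : 0 < μ) (hμL : μ < L) (hΔ : 0 < Δ) :
    0 < (4 / Δ) * (L - μ) + 2 * L := by
  nlinarith [div_pos four_pos hΔ]

theorem one_sub_two_mul_L_mul_h (hμ : 0 < μ) (hμL : μ < L) (hΔ : 0 < Δ)
    (hh : h = 1 / ((4 / Δ) * (L - μ) + 2 * L)) :
    1 - 2 * L * h = 2 / Δ * (2 * (L - μ) * h) := by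
  have : h * ((4 / Δ) * (L - μ) + 2 * L) = 1 := by
    rw [hh, one_div_mul_cancel (stepsize_denom_pos hμ hμL hΔ).ne']
  linear_combination -this

theorem mu_mul_h (hμ : 0 < μ) (hΔ : 0 < Δ) (hh : h = 1 / ((4 / Δ) * (L - μ) + 2 * L)) :
    μ * h = (4 * (L / μ - 1) / Δ + 2 * (L / μ))⁻¹ := by
  have : 4 * (L / μ - 1) / Δ + 2 * (L / μ) = ((4 / Δ) * (L - μ) + 2 * L) / μ := by
    field_simp
  rw [this, hh, inv_div, mul_one_div]

theorem one_add_inv_two_mul_sub_mul_h (hμ : 0 < μ) (hμL : μ < L) (hΔ : 0 < Δ)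
    (hh : h = 1 / ((4 / Δ) * (L - μ) + 2 * L)) :
    1 + (2 * (L - μ) * h)⁻¹ = 2 / Δ + (2 * (L / μ) - 1) / (L / μ - 1) := by
  have hLμ : L - μ ≠ 0 := sub_ne_zero.2 hμL.ne'
  have : (2 * (L / μ) - 1) / (L / μ - 1) = (2 * L - μ) / (L - μ) := by
    rw [div_sub_one hμ.ne', div_div_eq_mul_div]
    field_simp
  rw [this, hh, mul_one_div, inv_div]
  field_simp
  ring

end S2GD

theorem s2gd_parameter_choice_nu_eq_mu_general
    {L μ κ Δ h : ℝ} (hμ : 0 < μ) (hμL : μ < L) (hκ : κ = L / μ)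
    (hΔ0 : 0 < Δ)
    (hh : h = 1 / ((4 / Δ) * (L - μ) + 2 * L))
    {m : ℕ}
    (hm : ((4 * (κ - 1)) / Δ + 2 * κ) * Real.log (2 / Δ + (2 * κ - 1) / (κ - 1)) ≤ (m : ℝ)) :
    (1 - μ * h) ^ m / ((1 - (1 - μ * h) ^ m) * (1 - 2 * L * h)) +
        2 * (L - μ) * h / (1 - 2 * L * h) ≤ Δ := by
  subst hκ
  set e := 2 * (L - μ) * h
  have he : 0 < e := mul_pos (mul_pos two_pos (sub_pos.2 hμL))
    (hh ▸ one_div_pos.2 (S2GD.stepsize_denom_pos hμ hμL hΔ0))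
  have hx : (1 - μ * h) ^ m ≤ (1 + e⁻¹)⁻¹ := by
    rw [← S2GD.one_add_inv_two_mul_sub_mul_h hμ hμL hΔ0 hh] at hm
    rw [S2GD.mu_mul_h hμ hΔ0 hh]
    refine one_sub_inv_pow_le_inv_of_mul_log_le ?_ (add_pos one_pos (inv_pos.2 he)) hm
    have hκ1 : 1 < L / μ := (one_lt_div hμ).2 hμL
    have : 0 ≤ 4 * (L / μ - 1) / Δ := div_nonneg (by linarith) hΔ0.le
    linarith
  rw [S2GD.one_sub_two_mul_L_mul_h hμ hμL hΔ0 hh]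
  calc _ = ((1 - μ * h) ^ m / (1 - (1 - μ * h) ^ m) + e) / (2 / Δ * e) := by
        rw [div_mul_eq_div_div, add_div]
    _ ≤ (e + e) / (2 / Δ * e) := by
        gcongr
        exact div_one_sub_le_of_le_inv_one_add_inv he hx
    _ = Δ := by field_simp; ring

/-- ν = μ case of Theorem 6 of the S2GD paper: with the stated stepsize `h`
and epoch length `m`, the contraction factor is at most `Δ`. -/
theorem s2gd_parameter_choice_nu_eq_mu
    {L μ κ Δ h : ℝ} (hμ : 0 < μ) (hμL : μ < L) (hκ : κ = L / μ)
    (hΔ0 : 0 < Δ) (hΔ1 : Δ < 1)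
    (hh : h = 1 / ((4 / Δ) * (L - μ) + 2 * L))
    {m : ℕ} (hm1 : 1 ≤ m)
    (hm : ((4 * (κ - 1)) / Δ + 2 * κ) * Real.log (2 / Δ + (2 * κ - 1) / (κ - 1)) ≤ (m : ℝ)) :
    (1 - μ * h) ^ m / ((1 - (1 - μ * h) ^ m) * (1 - 2 * L * h)) +
        2 * (L - μ) * h / (1 - 2 * L * h) ≤ Δ :=
  s2gd_parameter_choice_nu_eq_mu_general hμ hμL hκ hΔ0 hh hm
end

section
/- Let 0 < μ < L, κ = L/μ, and 0 < Δ < 1. Set h = 1/((4/Δ)(L − μ) + 2L), and let m be a positive integer with m ≥ 8(κ−1)/Δ² + 8κ/Δ + 2κ²/(κ−1). Then 1/(μ h (1 − 2Lh) m) + 2(L − μ)h/(1 − 2Lh) ≤ Δ. -/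
/-!
With `D = (4 / Δ) (L - μ) + 2 L` and `h = 1 / D` one has `1 - 2 L h = 4 (L - μ) h / Δ`, so the
variance term `2 (L - μ) h / (1 - 2 L h)` is exactly `Δ / 2` and the contraction factor equals
`Δ / 2 · (D² / (2 μ (L - μ) m) + 1)`. The lower bound on `m` is precisely `D² / (2 μ (L - μ))`
written in terms of `κ`, so the bracket is at most `2`.
-/

namespace S2GD

lemma one_sub_two_mul_stepsize {L c Δ D : ℝ} (hΔ : Δ ≠ 0) (hD0 : D ≠ 0)
    (hD : D = (4 / Δ) * c + 2 * L) :
    1 - 2 * L * (1 / D) = 4 * c * (1 / D) / Δ := by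
  field_simp
  rw [hD]
  field_simp
  ring

lemma contraction_factor_eq {L μ c Δ D m : ℝ} (hμ : μ ≠ 0) (hc : c ≠ 0) (hΔ : Δ ≠ 0)
    (hm : m ≠ 0) (hD0 : D ≠ 0) (hD : D = (4 / Δ) * c + 2 * L) :
    1 / (μ * (1 / D) * (1 - 2 * L * (1 / D)) * m) + 2 * c * (1 / D) / (1 - 2 * L * (1 / D))
      = Δ / 2 * (D ^ 2 / (2 * μ * c * m) + 1) := by
  rw [one_sub_two_mul_stepsize hΔ hD0 hD]
  field_simp
  ring

lemma epoch_length_bound_mul_eq {L μ Δ : ℝ} (hμ : μ ≠ 0) (hc : L - μ ≠ 0) (hΔ : Δ ≠ 0) :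
    (8 * (L / μ - 1) / Δ ^ 2 + 8 * (L / μ) / Δ + 2 * (L / μ) ^ 2 / (L / μ - 1))
        * (2 * μ * (L - μ))
      = ((4 / Δ) * (L - μ) + 2 * L) ^ 2 := by
  rw [show L / μ - 1 = (L - μ) / μ by field_simp]
  field_simp
  ring

end S2GD

open S2GD in
theorem s2gd_parameter_choice_nu_eq_zero_general
    {L μ κ Δ h : ℝ} (hμ : 0 < μ) (hμL : μ < L) (hκ : κ = L / μ)
    (hΔ0 : 0 < Δ)
    (hh : h = 1 / ((4 / Δ) * (L - μ) + 2 * L))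
    {m : ℕ}
    (hm : 8 * (κ - 1) / Δ ^ 2 + 8 * κ / Δ + 2 * κ ^ 2 / (κ - 1) ≤ (m : ℝ)) :
    1 / (μ * h * (1 - 2 * L * h) * m) + 2 * (L - μ) * h / (1 - 2 * L * h) ≤ Δ := by
  subst hκ hh
  set D := (4 / Δ) * (L - μ) + 2 * L with hD
  have hc : 0 < L - μ := sub_pos.mpr hμL
  have hD0 : 0 < D := add_pos (mul_pos (by positivity) hc) (by linarith)
  have hden : 0 < 2 * μ * (L - μ) := by positivity
  have hD_sq : D ^ 2 ≤ 2 * μ * (L - μ) * m := by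
    rw [← epoch_length_bound_mul_eq hμ.ne' hc.ne' hΔ0.ne', mul_comm (2 * μ * (L - μ))]
    exact mul_le_mul_of_nonneg_right hm hden.le
  have hm0 : (0 : ℝ) < m := pos_of_mul_pos_right (hD_sq.trans_lt' (pow_pos hD0 2)) hden.le
  rw [contraction_factor_eq hμ.ne' hc.ne' hΔ0.ne' hm0.ne' hD0.ne' hD]
  have hratio : D ^ 2 / (2 * μ * (L - μ) * m) ≤ 1 := (div_le_one (by positivity)).mpr hD_sq
  linarith [mul_le_mul_of_nonneg_left hratio hΔ0.le]

/-- ν = 0 case of Theorem 6 of the S2GD paper: with the stated stepsize `h`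
and epoch length `m`, the contraction factor is at most `Δ`. -/
theorem s2gd_parameter_choice_nu_eq_zero
    {L μ κ Δ h : ℝ} (hμ : 0 < μ) (hμL : μ < L) (hκ : κ = L / μ)
    (hΔ0 : 0 < Δ) (hΔ1 : Δ < 1)
    (hh : h = 1 / ((4 / Δ) * (L - μ) + 2 * L))
    {m : ℕ} (hm1 : 1 ≤ m)
    (hm : 8 * (κ - 1) / Δ ^ 2 + 8 * κ / Δ + 2 * κ ^ 2 / (κ - 1) ≤ (m : ℝ)) :
    1 / (μ * h * (1 - 2 * L * h) * m) + 2 * (L - μ) * h / (1 - 2 * L * h) ≤ Δ :=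
  s2gd_parameter_choice_nu_eq_zero_general hμ hμL hκ hΔ0 hh hm
end

section
/- Let 0 < μ < L with κ = L/μ ≥ 2, and 0 < Δ < 1. Set h = 1/((4/Δ)(L − μ) + 2L), and let m be a positive integer with m ≥ (6κ/Δ) · log(5/Δ). Then (1 − μh)^m / ((1 − (1 − μh)^m)(1 − 2Lh)) + 2(L − μ)h/(1 − 2Lh) ≤ Δ. -/
set_option maxHeartbeats 1000000 in
/-- simplified epoch-length bound (25), ν = μ case: for `κ ≥ 2`, the threshold
`m ≥ (6κ/Δ) log(5/Δ)` guarantees a contraction factor of at most `Δ`. -/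
theorem s2gd_simple_parameter_choice_nu_eq_mu
    {L μ κ Δ h : ℝ} (hμ : 0 < μ) (hμL : μ < L) (hκ : κ = L / μ) (hκ2 : 2 ≤ κ)
    (hΔ0 : 0 < Δ) (hΔ1 : Δ < 1)
    (hh : h = 1 / ((4 / Δ) * (L - μ) + 2 * L))
    {m : ℕ} (hm1 : 1 ≤ m)
    (hm : (6 * κ / Δ) * Real.log (5 / Δ) ≤ (m : ℝ)) :
    (1 - μ * h) ^ m / ((1 - (1 - μ * h) ^ m) * (1 - 2 * L * h)) +
        2 * (L - μ) * h / (1 - 2 * L * h) ≤ Δ := by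
  have hL : 0 < L := hμ.trans hμL
  have hLμ : 0 < L - μ := sub_pos.2 hμL
  obtain ⟨A, hA⟩ : ∃ A : ℝ, A = 4 / Δ * (L - μ) := ⟨_, rfl⟩
  have hA0 : 0 < A := by rw [hA]; positivity
  have hden : 0 < A + 2 * L := by positivity
  have hh0 : 0 < h := by rw [hh, ← hA]; positivity
  have hhe : h * (A + 2 * L) = 1 := by
    rw [hh, ← hA]; field_simp
  have h2L : 1 - 2 * L * h = A * h := by nlinarith [hhe]
  have hAΔ : A * Δ = 4 * (L - μ) := by
    rw [hA]; field_simp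
  have hL2μ : 2 * μ ≤ L := by
    have h2 : 2 ≤ L / μ := hκ ▸ hκ2
    rw [le_div_iff₀ hμ] at h2; linarith
  have hκμ : κ * μ = L := by rw [hκ]; field_simp
  -- Second term equals Δ/2
  have hsecond : 2 * (L - μ) * h / (1 - 2 * L * h) = Δ / 2 := by
    rw [h2L, hA]
    field_simp
    ring
  -- μh ∈ (0,1)
  have hq0 : 0 ≤ 1 - μ * h := by
    nlinarith [mul_nonneg hh0.le (by linarith : (0:ℝ) ≤ A + 2 * L - μ)]
  -- (6κ/Δ)·(μh) ≥ 1
  have hΔeq : Δ = 4 * (L - μ) * h + 2 * L * Δ * h := by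
    linear_combination (-Δ) * hhe + h * hAΔ
  have h6 : 1 ≤ 6 * κ / Δ * (μ * h) := by
    have heq : 6 * κ / Δ * (μ * h) = 6 * L * h / Δ := by
      rw [← hκμ]; ring
    rw [heq, le_div_iff₀ hΔ0]
    nlinarith [mul_pos hL hh0, mul_pos hμ hh0, hΔ1]
  have hlogpos : 0 ≤ Real.log (5 / Δ) := by
    apply Real.log_nonneg
    rw [le_div_iff₀ hΔ0]; linarith
  have key : Real.log (5 / Δ) ≤ (m : ℝ) * (μ * h) := by
    have h1 := mul_le_mul_of_nonneg_right hm (mul_nonneg hμ.le hh0.le)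
    have h2 : Real.log (5 / Δ) * 1 ≤ Real.log (5 / Δ) * (6 * κ / Δ * (μ * h)) :=
      mul_le_mul_of_nonneg_left h6 hlogpos
    nlinarith
  -- (1-μh)^m ≤ Δ/5
  have hq1 : 1 - μ * h ≤ Real.exp (-(μ * h)) := by
    linarith [Real.add_one_le_exp (-(μ * h))]
  have hP : (1 - μ * h) ^ m ≤ Δ / 5 := by
    calc (1 - μ * h) ^ m ≤ (Real.exp (-(μ * h))) ^ m := pow_le_pow_left₀ hq0 hq1 m
      _ = Real.exp ((m : ℝ) * -(μ * h)) := (Real.exp_nat_mul _ m).symm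
      _ ≤ Real.exp (Real.log (Δ / 5)) := by
          apply Real.exp_le_exp.2
          have hlog : Real.log (Δ / 5) = - Real.log (5 / Δ) := by
            rw [← Real.log_inv, inv_div]
          rw [hlog, mul_neg]; linarith
      _ = Δ / 5 := Real.exp_log (by positivity)
  have hqm0 : 0 ≤ (1 - μ * h) ^ m := pow_nonneg hq0 m
  have h1P : 4 / 5 ≤ 1 - (1 - μ * h) ^ m := by linarith
  -- A ≥ 2L, hence Ah ≥ 1/2
  have hA2L : 2 * L ≤ A := by
    nlinarith [mul_pos hA0 (sub_pos.2 hΔ1)]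
  have hAh : 1 / 2 ≤ A * h := by
    have h2Lh : 2 * L * h ≤ A * h := mul_le_mul_of_nonneg_right hA2L hh0.le
    linarith [hhe, h2Lh]
  have hD : 2 / 5 ≤ (1 - (1 - μ * h) ^ m) * (1 - 2 * L * h) := by
    rw [h2L]
    have hmm2 := mul_le_mul h1P hAh (by norm_num : (0:ℝ) ≤ 1 / 2)
      (by linarith : (0:ℝ) ≤ 1 - (1 - μ * h) ^ m)
    linarith
  have hfirst : (1 - μ * h) ^ m / ((1 - (1 - μ * h) ^ m) * (1 - 2 * L * h)) ≤ Δ / 2 := by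
    have h3 := div_le_div₀ (by positivity : (0:ℝ) ≤ Δ / 5) hP (by norm_num : (0:ℝ) < 2 / 5) hD
    have h4 : Δ / 5 / (2 / 5) = Δ / 2 := by ring
    linarith [h4 ▸ h3]
  linarith
end

section
/- Let 0 < μ < L with κ = L/μ ≥ 2, and 0 < Δ < 1. Set h = 1/((4/Δ)(L − μ) + 2L), and let m be a positive integer with m ≥ 20κ/Δ². Then 1/(μ h (1 − 2Lh) m) + 2(L − μ)h/(1 − 2Lh) ≤ Δ. -/
/-! With `h = 1 / ((4/Δ)(L - μ) + 2L)` one has `1 - 2Lh = (4/Δ)(L - μ) h`, so the variance term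
`2(L - μ)h / (1 - 2Lh)` equals exactly `Δ/2` and the epoch term equals `Δ / (4μ(L - μ) h² m)`.
The latter is at most `Δ/2` as soon as `(1/h)² ≤ 2μ(L - μ) m`; since `Δ ≤ 1` and `L - μ ∈ [L/2, L)`
(this is `κ ≥ 2`), `(Δ/h)² ≤ (4(L - μ) + 2L)² ≤ 40 L (L - μ)`, and `m μ Δ² ≥ 20 L` closes the gap. -/

section
variable {L μ Δ h : ℝ}

lemma one_sub_two_mul_eq_of_mul_eq_one (hh : h * ((4 / Δ) * (L - μ) + 2 * L) = 1) :
    1 - 2 * L * h = (4 / Δ) * (L - μ) * h := by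
  linear_combination -hh

lemma variance_term_eq_half (hΔ : Δ ≠ 0) (hμL : μ ≠ L) (hh0 : h ≠ 0)
    (hgap : 1 - 2 * L * h = (4 / Δ) * (L - μ) * h) :
    2 * (L - μ) * h / (1 - 2 * L * h) = Δ / 2 := by
  have : L - μ ≠ 0 := sub_ne_zero.2 hμL.symm
  rw [hgap]
  field_simp
  ring

lemma epoch_term_eq (m : ℝ) (hgap : 1 - 2 * L * h = (4 / Δ) * (L - μ) * h) :
    1 / (μ * h * (1 - 2 * L * h) * m) = Δ / (4 * μ * (L - μ) * h ^ 2 * m) := by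
  rw [hgap]
  simp only [div_eq_mul_inv, mul_inv, inv_inv]
  ring

lemma sq_four_mul_sub_add_le (hμ : 0 ≤ μ) (h2μ : 2 * μ ≤ L) (hΔ0 : 0 ≤ Δ) (hΔ1 : Δ ≤ 1) :
    (4 * (L - μ) + 2 * L * Δ) ^ 2 ≤ 40 * L * (L - μ) := by
  have hmono : (4 * (L - μ) + 2 * L * Δ) ^ 2 ≤ (4 * (L - μ) + 2 * L) ^ 2 := by
    have hL : 0 ≤ L := by linarith
    exact pow_le_pow_left₀ (by nlinarith) (by nlinarith) 2
  -- `(4x + 2L)² - 40Lx = 4((2x - L)(2x - 2L) - L²)` with `x = L - μ ∈ [L/2, L]`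
  nlinarith [mul_nonpos_iff.2 (Or.inl ⟨(by linarith : 0 ≤ 2 * (L - μ) - L),
    (by linarith : 2 * (L - μ) - 2 * L ≤ 0)⟩)]

lemma one_le_mul_sq_of_mul_eq_one (m : ℝ) (hμ : 0 < μ) (h2μ : 2 * μ ≤ L)
    (hΔ0 : 0 < Δ) (hΔ1 : Δ ≤ 1) (hmμ : 20 * L ≤ m * μ * Δ ^ 2)
    (hh : h * ((4 / Δ) * (L - μ) + 2 * L) = 1) :
    1 ≤ 2 * μ * (L - μ) * h ^ 2 * m := by
  set D := (4 / Δ) * (L - μ) + 2 * L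
  have hDΔ : D * Δ = 4 * (L - μ) + 2 * L * Δ := by
    simp only [D]
    field_simp
  have hsq : (D * Δ) ^ 2 ≤ (2 * μ * (L - μ) * m) * Δ ^ 2 := by
    rw [hDΔ]
    nlinarith [sq_four_mul_sub_add_le hμ.le h2μ hΔ0.le hΔ1]
  have hD2 : D ^ 2 ≤ 2 * μ * (L - μ) * m :=
    le_of_mul_le_mul_right (by linarith [hsq]) (by positivity : 0 < Δ ^ 2)
  calc 1 = (h * D) ^ 2 := by rw [hh]; norm_num
    _ = h ^ 2 * D ^ 2 := by ring
    _ ≤ h ^ 2 * (2 * μ * (L - μ) * m) := by gcongr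
    _ = 2 * μ * (L - μ) * h ^ 2 * m := by ring

end

theorem s2gd_simple_parameter_choice_nu_eq_zero_general
    {L μ κ Δ h : ℝ} (hμ : 0 < μ) (hμL : μ < L) (hκ : κ = L / μ) (hκ2 : 2 ≤ κ)
    (hΔ0 : 0 < Δ) (hΔ1 : Δ < 1)
    (hh : h = 1 / ((4 / Δ) * (L - μ) + 2 * L))
    {m : ℕ}
    (hm : 20 * κ / Δ ^ 2 ≤ (m : ℝ)) :
    1 / (μ * h * (1 - 2 * L * h) * m) + 2 * (L - μ) * h / (1 - 2 * L * h) ≤ Δ := by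
  have h2μ : 2 * μ ≤ L := by rwa [hκ, le_div_iff₀ hμ] at hκ2
  have hmμ : 20 * L ≤ m * μ * Δ ^ 2 := by
    rw [hκ, div_le_iff₀ (pow_pos hΔ0 2), mul_div_assoc', div_le_iff₀ hμ] at hm
    linarith
  have hD : h * ((4 / Δ) * (L - μ) + 2 * L) = 1 := by
    rw [hh]
    exact one_div_mul_cancel
      (add_pos (mul_pos (div_pos four_pos hΔ0) (sub_pos.2 hμL)) (by linarith)).ne'
  have hh0 : h ≠ 0 := left_ne_zero_of_mul_eq_one hD
  have hgap := one_sub_two_mul_eq_of_mul_eq_one hD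
  have hmain := one_le_mul_sq_of_mul_eq_one (m : ℝ) hμ h2μ hΔ0 hΔ1.le hmμ hD
  have hepoch : Δ / (4 * μ * (L - μ) * h ^ 2 * m) ≤ Δ / 2 :=
    div_le_div_of_nonneg_left hΔ0.le two_pos (by linarith)
  rw [epoch_term_eq (m : ℝ) hgap, variance_term_eq_half hΔ0.ne' hμL.ne hh0 hgap]
  linarith

/-- simplified epoch-length bound (25), ν = 0 case: for `κ ≥ 2`, the threshold
`m ≥ 20κ/Δ²` guarantees a contraction factor of at most `Δ`. -/
theorem s2gd_simple_parameter_choice_nu_eq_zero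
    {L μ κ Δ h : ℝ} (hμ : 0 < μ) (hμL : μ < L) (hκ : κ = L / μ) (hκ2 : 2 ≤ κ)
    (hΔ0 : 0 < Δ) (hΔ1 : Δ < 1)
    (hh : h = 1 / ((4 / Δ) * (L - μ) + 2 * L))
    {m : ℕ} (hm1 : 1 ≤ m)
    (hm : 20 * κ / Δ ^ 2 ≤ (m : ℝ)) :
    1 / (μ * h * (1 - 2 * L * h) * m) + 2 * (L - μ) * h / (1 - 2 * L * h) ≤ Δ :=
  s2gd_simple_parameter_choice_nu_eq_zero_general hμ hμL hκ hκ2 hΔ0 hΔ1 hh hm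
end

section
/- Let 0 < μ < L, κ = L/μ, and 0 < Δ < 1. Then: (a) the function φ(h) = h(Δ − 2(ΔL + L − μ)h) is maximized over h > 0 uniquely at h* = 1/((4/Δ)(L − μ) + 4L); and (b) with h = h* and any positive integer m ≥ 8(κ−1)/Δ² + 8κ/Δ, one has 1/(μ h (1 − 2Lh) m) + 2(L − μ)h/(1 − 2Lh) ≤ Δ. -/
/-- optimal stepsize in the ν = 0 case, equation (27) of the S2GD paper:
(a) `φ(h) = h(Δ − 2(ΔL + L − μ)h)` is uniquely maximized over `h > 0` at
`h* = 1/((4/Δ)(L − μ) + 4L)`; (b) with `h = h*` and `m ≥ 8(κ−1)/Δ² + 8κ/Δ`, the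
contraction factor is at most `Δ`. -/
theorem s2gd_optimal_stepsize_nu_eq_zero
    {L μ κ Δ : ℝ} (hμ : 0 < μ) (hμL : μ < L) (hκ : κ = L / μ)
    (hΔ0 : 0 < Δ) (hΔ1 : Δ < 1)
    (φ : ℝ → ℝ) (hφ : φ = fun h => h * (Δ - 2 * (Δ * L + L - μ) * h))
    {hstar : ℝ} (hhstar : hstar = 1 / ((4 / Δ) * (L - μ) + 4 * L)) :
    ((∀ h : ℝ, 0 < h → φ h ≤ φ hstar) ∧
      (∀ h : ℝ, 0 < h → φ h = φ hstar → h = hstar)) ∧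
    (∀ m : ℕ, 1 ≤ m → 8 * (κ - 1) / Δ ^ 2 + 8 * κ / Δ ≤ (m : ℝ) →
      1 / (μ * hstar * (1 - 2 * L * hstar) * m) +
        2 * (L - μ) * hstar / (1 - 2 * L * hstar) ≤ Δ) := by
  have hL : 0 < L := hμ.trans hμL
  set A : ℝ := Δ * L + L - μ with hA_def
  have hA : 0 < A := by nlinarith
  have h2A : 0 < 2 * A - L * Δ := by rw [hA_def]; nlinarith
  have hden : (4 / Δ) * (L - μ) + 4 * L = 4 * A / Δ := by
    rw [hA_def]; field_simp; ring
  have hstar' : hstar = Δ / (4 * A) := by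
    rw [hhstar, hden, one_div_div]
  have key : ∀ h : ℝ, φ hstar - φ h = 2 * A * (h - hstar) ^ 2 := by
    intro h
    rw [hφ, hstar']
    simp only
    field_simp
    ring
  constructor
  · constructor
    · intro h _
      have := key h
      nlinarith [sq_nonneg (h - hstar)]
    · intro h _ heq
      have hk := key h
      rw [heq, sub_self] at hk
      have hz : (h - hstar) ^ 2 = 0 := by nlinarith [sq_nonneg (h - hstar)]
      have := pow_eq_zero_iff (n := 2) (by norm_num) |>.mp hz
      linarith [sub_eq_zero.mp this]
  · intro m hm1 hm
    have hm0 : (0 : ℝ) < m := by exact_mod_cast hm1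
    rw [hκ] at hm
    have hmA : 8 * A ≤ (m : ℝ) * μ * Δ ^ 2 := by
      have h1 : 8 * (L / μ - 1) / Δ ^ 2 + 8 * (L / μ) / Δ = 8 * A / (μ * Δ ^ 2) := by
        rw [hA_def]; field_simp; ring
      rw [h1, div_le_iff₀ (by positivity)] at hm
      nlinarith
    rw [hstar']
    have hDeq : 1 - 2 * L * (Δ / (4 * A)) = (2 * A - L * Δ) / (2 * A) := by
      field_simp; ring
    rw [hDeq]
    have e1 : μ * (Δ / (4 * A)) * ((2 * A - L * Δ) / (2 * A)) * m
        = μ * Δ * (2 * A - L * Δ) * m / (8 * A ^ 2) := by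
      field_simp; ring
    have e2 : 2 * (L - μ) * (Δ / (4 * A)) / ((2 * A - L * Δ) / (2 * A))
        = (L - μ) * Δ / (2 * A - L * Δ) := by
      rw [div_div_eq_mul_div, div_eq_div_iff (by positivity) (by positivity)]
      field_simp
      ring
    rw [e1, e2, one_div_div]
    rw [div_add_div _ _ (by positivity) (by positivity), div_le_iff₀ (by positivity)]
    have H := mul_le_mul_of_nonneg_right hmA (mul_nonneg hA.le h2A.le)
    simp only [hA_def] at H ⊢
    nlinarith [H]
end
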